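/- For any ε ∈ (0,1) there exists a positive constant C_ε such that |U^r(t,x) − λ^{−1}(x/t)| ≤ C_ε (1+t)^{−1+ε} for all t ≥ 1 and all x with λ₋ t ≤ x ≤ λ₊ t. -/

import Mathlib

/-!
Write `y = Y t x`, so that `x = y + t w₀(y)` and `w(t,x) − x/t = −y/t`. On `[λ₋, λ₊]` the inverse
`λ⁻¹` is Lipschitz with constant `1 / min f''`, so it suffices to show `|y| = O(t^ε)`. Since
`x/t ∈ [λ₋, λ₊]` while `w₀(y)` differs from `λ₊` (resp. `λ₋`) by about `e^{−2|y|}`, the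
characteristic relation forces `|y| e^{2|y|} ≤ (λ₊ − λ₋) t`, hence `|y| = O(log t)`.
-/

open Real MeasureTheory Filter Set

/-- The smooth monotone initial datum `w₀(x) = (w₋+w₊)/2 + ((w₊−w₋)/2)·tanh x`. -/
noncomputable def w0 (wm wp x : ℝ) : ℝ := (wm + wp) / 2 + ((wp - wm) / 2) * Real.tanh x

lemma Real.one_sub_tanh_mul_exp_add_one (s : ℝ) : (1 - tanh s) * (exp (2 * s) + 1) = 2 := by
  have h : exp (2 * s) = exp s / exp (-s) := by rw [← exp_sub]; ring_nf
  rw [tanh_eq, h]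
  field_simp
  ring

lemma mul_exp_two_mul_le_of_le_one_sub_tanh {s c : ℝ} (hs : 0 ≤ s)
    (h : s ≤ c / 2 * (1 - tanh s)) : s * exp (2 * s) ≤ c :=
  calc s * exp (2 * s) ≤ s * (exp (2 * s) + 1) := by linarith
    _ ≤ c / 2 * (1 - tanh s) * (exp (2 * s) + 1) := by gcongr
    _ = c := by rw [mul_assoc, Real.one_sub_tanh_mul_exp_add_one]; ring

lemma w0_mem_Icc {wm wp : ℝ} (hw : wm ≤ wp) (y : ℝ) : w0 wm wp y ∈ Icc wm wp := by
  have := tanh_lt_one y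
  have := neg_one_lt_tanh y
  constructor <;> unfold w0 <;> nlinarith

lemma abs_mul_exp_le_of_add_mul_w0_mem_Icc {wm wp t y : ℝ}
    (hl : wm * t ≤ y + t * w0 wm wp y) (hr : y + t * w0 wm wp y ≤ wp * t) :
    |y| * exp (2 * |y|) ≤ (wp - wm) * t := by
  rcases le_total 0 y with hy | hy
  · rw [abs_of_nonneg hy]
    refine mul_exp_two_mul_le_of_le_one_sub_tanh hy ?_
    unfold w0 at hr
    linarith
  · rw [abs_of_nonpos hy]
    refine mul_exp_two_mul_le_of_le_one_sub_tanh (neg_nonneg.2 hy) ?_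
    unfold w0 at hl
    rw [tanh_neg]
    linarith

lemma le_max_one_half_log_of_mul_exp_two_mul_le {s c : ℝ}
    (h : s * exp (2 * s) ≤ c) : s ≤ max 1 (log c / 2) := by
  rcases le_or_gt s 1 with hs1 | hs1
  · exact le_max_of_le_left hs1
  · have hexp : exp (2 * s) ≤ c := by nlinarith [exp_pos (2 * s)]
    have hlog := (le_log_iff_exp_le (by linarith [exp_pos (2 * s)])).2 hexp
    exact le_max_of_le_right (by linarith)

lemma max_one_half_log_mul_le_rpow {K t ε : ℝ} (hK : 0 < K) (ht : 1 ≤ t) (hε : 0 < ε) :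
    max 1 (log (K * t) / 2) ≤ (1 + |log K| / 2 + 1 / (2 * ε)) * t ^ ε := by
  have ht0 : 0 < t := by linarith
  have hlog := log_le_rpow_div ht0.le hε
  have hone : 1 ≤ t ^ ε := one_le_rpow ht hε.le
  have hlogK := le_abs_self (log K)
  have hB : 0 ≤ |log K| / 2 + 1 / (2 * ε) := by positivity
  rw [log_mul hK.ne' ht0.ne']
  refine max_le (by nlinarith) ?_
  calc (log K + log t) / 2 ≤ |log K| / 2 * t ^ ε + t ^ ε / ε / 2 := by nlinarith [abs_nonneg (log K)]
    _ = (|log K| / 2 + 1 / (2 * ε)) * t ^ ε := by field_simp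
    _ ≤ _ := by linarith

lemma rpow_le_two_mul_one_add_rpow {t p : ℝ} (ht : 1 ≤ t) (hp : -1 ≤ p) (hp0 : p ≤ 0) :
    t ^ p ≤ 2 * (1 + t) ^ p := by
  have ht0 : 0 ≤ t := by linarith
  have hhalf : (1 / 2 : ℝ) ≤ 2 ^ p := by
    calc (1 / 2 : ℝ) = 2 ^ (-1 : ℝ) := by norm_num
      _ ≤ 2 ^ p := rpow_le_rpow_of_exponent_le one_le_two hp
  calc t ^ p ≤ 2 * (2 ^ p * t ^ p) := by nlinarith [rpow_nonneg ht0 p]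
    _ = 2 * (2 * t) ^ p := by rw [mul_rpow zero_le_two ht0]
    _ ≤ 2 * (1 + t) ^ p := by gcongr ?_ * ?_; exact rpow_le_rpow_of_nonpos (by linarith) (by linarith) hp0

lemma exists_pos_mul_sub_le_sub_of_deriv_pos {g : ℝ → ℝ} {a b : ℝ} (hab : a ≤ b)
    (hg : ContDiff ℝ 1 g) (hpos : ∀ u ∈ Icc a b, 0 < deriv g u) :
    ∃ m > 0, ∀ u ∈ Icc a b, ∀ v ∈ Icc a b, u ≤ v → m * (v - u) ≤ g v - g u := by
  obtain ⟨u₀, hu₀, hmin⟩ := isCompact_Icc.exists_isMinOn (nonempty_Icc.2 hab)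
    (hg.continuous_deriv le_rfl).continuousOn
  exact ⟨deriv g u₀, hpos u₀ hu₀, fun u hu v hv huv =>
    (convex_Icc a b).mul_sub_le_image_sub_of_le_deriv hg.continuous.continuousOn
      (hg.differentiable one_ne_zero).differentiableOn
      (fun w hw => hmin (interior_subset hw)) u hu v hv huv⟩

lemma mul_abs_sub_le_of_leftInvOn {g linv : ℝ → ℝ} {a b m : ℝ} (hab : a ≤ b)
    (hg : ContinuousOn g (Icc a b)) (hlinv : ∀ u ∈ Icc a b, linv (g u) = u)
    (hexp : ∀ u ∈ Icc a b, ∀ v ∈ Icc a b, u ≤ v → m * (v - u) ≤ g v - g u) :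
    ∀ s ∈ Icc (g a) (g b), ∀ s' ∈ Icc (g a) (g b), m * |linv s - linv s'| ≤ |s - s'| := by
  intro s hs s' hs'
  obtain ⟨u, hu, rfl⟩ := intermediate_value_Icc hab hg hs
  obtain ⟨v, hv, rfl⟩ := intermediate_value_Icc hab hg hs'
  rw [hlinv u hu, hlinv v hv]
  rcases le_total u v with huv | hvu
  · rw [abs_sub_comm u, abs_sub_comm (g u), abs_of_nonneg (sub_nonneg.2 huv)]
    exact (hexp u hu v hv huv).trans (le_abs_self _)
  · rw [abs_of_nonneg (sub_nonneg.2 hvu)]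
    exact (hexp v hv u hu hvu).trans (le_abs_self _)

theorem stmt_7 (um up : ℝ) (hu : um < up)
    (f : ℝ → ℝ) (hf : ContDiff ℝ 3 f)
    (hconv : ∀ u ∈ Set.Icc um up, 0 < deriv (deriv f) u)
    (linv : ℝ → ℝ) (hlinv : ∀ u ∈ Set.Icc um up, linv (deriv f u) = u)
    (Y : ℝ → ℝ → ℝ)
    (hY : ∀ t x : ℝ, 0 ≤ t → Y t x + t * w0 (deriv f um) (deriv f up) (Y t x) = x) :
    let Ur : ℝ → ℝ → ℝ := fun t x => linv (w0 (deriv f um) (deriv f up) (Y t x))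
    ∀ ε : ℝ, 0 < ε → ε < 1 → ∃ C : ℝ, 0 < C ∧ ∀ t : ℝ, 1 ≤ t → ∀ x : ℝ,
      deriv f um * t ≤ x → x ≤ deriv f up * t →
      |Ur t x - linv (x / t)| ≤ C * (1 + t) ^ (-1 + ε) := by
  intro Ur ε hε hε1
  set lm := deriv f um
  set lp := deriv f up
  have hf' : ContDiff ℝ 1 (deriv f) := (hf.deriv' (n := 2)).of_le (by norm_num)
  obtain ⟨m, hm, hgrowth⟩ := exists_pos_mul_sub_le_sub_of_deriv_pos hu.le hf' hconv
  have hlip := mul_abs_sub_le_of_leftInvOn hu.le hf'.continuous.continuousOn hlinv hgrowth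
  have hK : 0 < lp - lm := (mul_pos hm (sub_pos.2 hu)).trans_le
    (hgrowth um (left_mem_Icc.2 hu.le) up (right_mem_Icc.2 hu.le) hu.le)
  set B := 1 + |log (lp - lm)| / 2 + 1 / (2 * ε)
  refine ⟨2 * B / m, by positivity, fun t ht x hl hr => ?_⟩
  have ht0 : 0 < t := by linarith
  set y := Y t x
  set W := w0 lm lp y
  have hchar : y + t * W = x := hY t x ht0.le
  have hy : |y| ≤ B * t ^ ε :=
    (le_max_one_half_log_of_mul_exp_two_mul_le (abs_mul_exp_le_of_add_mul_w0_mem_Icc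
      (by rwa [hchar]) (by rwa [hchar]))).trans (max_one_half_log_mul_le_rpow hK ht hε)
  have hdist : |W - x / t| = |y| / t := by
    have h : W - x / t = -(y / t) := by
      field_simp
      linarith
    rw [h, abs_neg, abs_div, abs_of_pos ht0]
  have hxt : x / t ∈ Icc lm lp := ⟨(le_div_iff₀ ht0).2 hl, (div_le_iff₀ ht0).2 hr⟩
  calc |Ur t x - linv (x / t)|
      ≤ |W - x / t| / m := (le_div_iff₀' hm).2 (hlip W (w0_mem_Icc (sub_pos.1 hK).le y) _ hxt)
    _ ≤ B * t ^ ε / t / m := by rw [hdist]; gcongr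
    _ = B / m * t ^ (-1 + ε) := by rw [rpow_add ht0, rpow_neg_one]; ring
    _ ≤ B / m * (2 * (1 + t) ^ (-1 + ε)) := by
        gcongr; exact rpow_le_two_mul_one_add_rpow ht (by linarith) (by linarith)
    _ = 2 * B / m * (1 + t) ^ (-1 + ε) := by ring
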